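/- Let n ≥ 1, let P be an invertible real n×n matrix, let f, y ∈ ℝⁿ, σ² > 0 and λ > 0. Then the function l(x) := −(1/(2σ²))‖y − x‖² − (λ/2)‖P x − f‖² has the unique global maximizer x̂ := (I + σ²λ Pᵀ P)⁻¹ (y + σ²λ Pᵀ f), and x̂ admits the kernel representation x̂ = K α̂ + P⁻¹ f, where K := (Pᵀ P)⁻¹ and α̂ := (K + λσ² I)⁻¹ (y − P⁻¹ f). -/

import Mathlib

/-!
The objective is a concave quadratic whose gradient vanishes where
`(1 + σ²λ PᵀP) x = y + σ²λ Pᵀ f`. Expanding around that critical point `x̂` gives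
`l x = l x̂ - ‖x - x̂‖² / (2σ²) - (λ/2) ‖P (x - x̂)‖²`, so `x̂` is the unique maximiser.
For the kernel form, `K + σ²λ I = (I + σ²λ PᵀP) K` gives `K (K + σ²λ I)⁻¹ = (I + σ²λ PᵀP)⁻¹`,
and `y + σ²λ Pᵀ f = (y - P⁻¹ f) + (I + σ²λ PᵀP) P⁻¹ f`.
-/

open Matrix

namespace Matrix

variable {ι m : Type*} [Fintype ι] [Fintype m]

theorem dotProduct_self_nonneg {R : Type*} [Ring R] [LinearOrder R] [IsStrictOrderedRing R]
    (v : ι → R) : 0 ≤ v ⬝ᵥ v :=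
  Fintype.sum_nonneg fun i => mul_self_nonneg (v i)

section Inverse

variable {R : Type*} [CommRing R] [DecidableEq ι]

theorem inv_mul_inv_inv_add_smul_one {G : Matrix ι ι R} (hG : IsUnit G) (c : R) :
    G⁻¹ * (G⁻¹ + c • 1)⁻¹ = (1 + c • G)⁻¹ := by
  have hGdet : IsUnit G.det := (isUnit_iff_isUnit_det G).1 hG
  have hfactor : G⁻¹ + c • 1 = (1 + c • G) * G⁻¹ := by
    rw [add_mul, one_mul, smul_mul_assoc, mul_nonsing_inv G hGdet]
  rw [hfactor, mul_inv_rev, nonsing_inv_nonsing_inv G hGdet, ← Matrix.mul_assoc,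
    nonsing_inv_mul G hGdet, Matrix.one_mul]

theorem inv_one_add_smul_mulVec_add_smul_mulVec {G : Matrix ι ι R} (hG : IsUnit G) {c : R}
    (hA : IsUnit (1 + c • G)) (y z : ι → R) :
    (1 + c • G)⁻¹ *ᵥ (y + c • G *ᵥ z) = G⁻¹ *ᵥ ((G⁻¹ + c • 1)⁻¹ *ᵥ (y - z)) + z := by
  have hAdet : IsUnit (1 + c • G).det := (isUnit_iff_isUnit_det _).1 hA
  have hsplit : y + c • G *ᵥ z = (y - z) + (1 + c • G) *ᵥ z := by
    rw [add_mulVec, one_mulVec, smul_mulVec]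
    abel
  rw [hsplit, mulVec_add, mulVec_mulVec, nonsing_inv_mul _ hAdet, one_mulVec, mulVec_mulVec,
    inv_mul_inv_inv_add_smul_one hG]

end Inverse

theorem posDef_one_add_smul_transpose_mul_self [DecidableEq ι] (P : Matrix m ι ℝ) {c : ℝ}
    (hc : 0 ≤ c) : (1 + c • (Pᵀ * P)).PosDef := by
  have hPTP : (Pᵀ * P).PosSemidef := by
    simpa [conjTranspose_eq_transpose_of_trivial] using posSemidef_conjTranspose_mul_self P
  exact PosDef.one.add_posSemidef (hPTP.smul hc)

theorem sub_eq_smul_transpose_mulVec_of_normal_eq [DecidableEq ι] {P : Matrix m ι ℝ}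
    {f : m → ℝ} {y x : ι → ℝ} {c : ℝ} (h : (1 + c • (Pᵀ * P)) *ᵥ x = y + c • Pᵀ *ᵥ f) :
    y - x = c • Pᵀ *ᵥ (P *ᵥ x - f) := by
  rw [add_mulVec, one_mulVec, smul_mulVec, ← mulVec_mulVec] at h
  rw [mulVec_sub, smul_sub]
  linear_combination (norm := module) -h

end Matrix

section RidgeObjective

variable {ι m : Type*} [Fintype ι] [Fintype m]

def ridgeObjective (a b : ℝ) (P : Matrix m ι ℝ) (f : m → ℝ) (y x : ι → ℝ) : ℝ :=
  -a * ((y - x) ⬝ᵥ (y - x)) - b * ((P *ᵥ x - f) ⬝ᵥ (P *ᵥ x - f))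

variable {a b : ℝ} {P : Matrix m ι ℝ} {f : m → ℝ} {y xc : ι → ℝ}

theorem ridgeObjective_eq_sub_of_critical (hcrit : a • (y - xc) = b • Pᵀ *ᵥ (P *ᵥ xc - f))
    (x : ι → ℝ) :
    ridgeObjective a b P f y x = ridgeObjective a b P f y xc
      - a * ((x - xc) ⬝ᵥ (x - xc)) - b * (P *ᵥ (x - xc) ⬝ᵥ P *ᵥ (x - xc)) := by
  have hcross : a * ((x - xc) ⬝ᵥ (y - xc)) = b * (P *ᵥ (x - xc) ⬝ᵥ (P *ᵥ xc - f)) := by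
    rw [← smul_eq_mul, ← dotProduct_smul, hcrit, dotProduct_smul, dotProduct_mulVec,
      vecMul_transpose, smul_eq_mul]
  have hy : y - x = (y - xc) - (x - xc) := by abel
  have hP : P *ᵥ x - f = (P *ᵥ xc - f) + P *ᵥ (x - xc) := by
    rw [mulVec_sub]
    abel
  unfold ridgeObjective
  rw [hy, hP]
  generalize x - xc = d at *
  generalize y - xc = e at *
  generalize P *ᵥ xc - f = r at *
  generalize P *ᵥ d = s at *
  simp only [sub_dotProduct, dotProduct_sub, add_dotProduct, dotProduct_add,
    dotProduct_comm e d, dotProduct_comm r s]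
  linear_combination 2 * hcross

theorem ridgeObjective_le_of_critical (ha : 0 ≤ a) (hb : 0 ≤ b)
    (hcrit : a • (y - xc) = b • Pᵀ *ᵥ (P *ᵥ xc - f)) (x : ι → ℝ) :
    ridgeObjective a b P f y x ≤ ridgeObjective a b P f y xc := by
  rw [ridgeObjective_eq_sub_of_critical hcrit x]
  have hd := mul_nonneg ha (dotProduct_self_nonneg (x - xc))
  have hPd := mul_nonneg hb (dotProduct_self_nonneg (P *ᵥ (x - xc)))
  linarith

theorem ridgeObjective_eq_iff_of_critical (ha : 0 < a) (hb : 0 ≤ b)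
    (hcrit : a • (y - xc) = b • Pᵀ *ᵥ (P *ᵥ xc - f)) (x : ι → ℝ) :
    ridgeObjective a b P f y x = ridgeObjective a b P f y xc ↔ x = xc := by
  refine ⟨fun h => ?_, fun h => h ▸ rfl⟩
  rw [ridgeObjective_eq_sub_of_critical hcrit x] at h
  have hd := dotProduct_self_nonneg (x - xc)
  have hPd := mul_nonneg hb (dotProduct_self_nonneg (P *ᵥ (x - xc)))
  have hzero : (x - xc) ⬝ᵥ (x - xc) = 0 := by nlinarith
  exact sub_eq_zero.1 (dotProduct_self_eq_zero.1 hzero)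

end RidgeObjective

theorem closed_form_state_estimate_general
    {n : ℕ} (P : Matrix (Fin n) (Fin n) ℝ) (hP : IsUnit P)
    (f y : Fin n → ℝ) (σ2 lam : ℝ) (hσ2 : 0 < σ2) (hlam : 0 < lam)
    (l : (Fin n → ℝ) → ℝ)
    (hl : ∀ x, l x = -(1 / (2 * σ2)) * ((y - x) ⬝ᵥ (y - x))
          - (lam / 2) * ((P.mulVec x - f) ⬝ᵥ (P.mulVec x - f)))
    (xhat : Fin n → ℝ)
    (hxhat : xhat = ((1 : Matrix (Fin n) (Fin n) ℝ) + (σ2 * lam) • (Pᵀ * P))⁻¹.mulVec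
        (y + (σ2 * lam) • Pᵀ.mulVec f))
    (K : Matrix (Fin n) (Fin n) ℝ) (hK : K = (Pᵀ * P)⁻¹)
    (αhat : Fin n → ℝ)
    (hαhat : αhat = (K + (lam * σ2) • (1 : Matrix (Fin n) (Fin n) ℝ))⁻¹.mulVec
        (y - P⁻¹.mulVec f)) :
    (∀ x : Fin n → ℝ, l x ≤ l xhat ∧ (l x = l xhat ↔ x = xhat)) ∧
      xhat = K.mulVec αhat + P⁻¹.mulVec f := by
  have hA : IsUnit (1 + (σ2 * lam) • (Pᵀ * P)) :=
    (posDef_one_add_smul_transpose_mul_self P (mul_pos hσ2 hlam).le).isUnit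
  have hnormal : (1 + (σ2 * lam) • (Pᵀ * P)) *ᵥ xhat = y + (σ2 * lam) • Pᵀ *ᵥ f := by
    rw [hxhat, mulVec_mulVec, mul_nonsing_inv _ ((isUnit_iff_isUnit_det _).1 hA), one_mulVec]
  have hcrit : (1 / (2 * σ2)) • (y - xhat) = (lam / 2) • Pᵀ *ᵥ (P *ᵥ xhat - f) := by
    rw [sub_eq_smul_transpose_mulVec_of_normal_eq hnormal, smul_smul]
    congr 1
    field_simp
  obtain rfl : l = ridgeObjective (1 / (2 * σ2)) (lam / 2) P f y := funext hl
  refine ⟨fun x => ⟨ridgeObjective_le_of_critical (by positivity) (by positivity) hcrit x,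
    ridgeObjective_eq_iff_of_critical (by positivity) (by positivity) hcrit x⟩, ?_⟩
  have hPf : Pᵀ *ᵥ f = (Pᵀ * P) *ᵥ (P⁻¹ *ᵥ f) := by
    rw [← mulVec_mulVec, mulVec_mulVec f P, mul_nonsing_inv _ ((isUnit_iff_isUnit_det _).1 hP),
      one_mulVec]
  rw [hxhat, hαhat, hK, hPf, mul_comm lam σ2]
  exact inv_one_add_smul_mulVec_add_smul_mulVec ((P.isUnit_transpose.2 hP).mul hP) hA y _

/-- Let `P` be an invertible real `n × n` matrix (`n ≥ 1`), `f, y ∈ ℝⁿ`,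
`σ² > 0`, `λ > 0`. Then `l(x) := −(1/(2σ²))‖y − x‖² − (λ/2)‖P x − f‖²` has the unique
global maximizer `x̂ := (I + σ²λ Pᵀ P)⁻¹ (y + σ²λ Pᵀ f)`, and `x̂` admits the kernel
representation `x̂ = K α̂ + P⁻¹ f`, where `K := (Pᵀ P)⁻¹` and
`α̂ := (K + λσ² I)⁻¹ (y − P⁻¹ f)`. -/
theorem closed_form_state_estimate
    {n : ℕ} (hn : 1 ≤ n) (P : Matrix (Fin n) (Fin n) ℝ) (hP : IsUnit P)
    (f y : Fin n → ℝ) (σ2 lam : ℝ) (hσ2 : 0 < σ2) (hlam : 0 < lam)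
    (l : (Fin n → ℝ) → ℝ)
    (hl : ∀ x, l x = -(1 / (2 * σ2)) * ((y - x) ⬝ᵥ (y - x))
          - (lam / 2) * ((P.mulVec x - f) ⬝ᵥ (P.mulVec x - f)))
    (xhat : Fin n → ℝ)
    (hxhat : xhat = ((1 : Matrix (Fin n) (Fin n) ℝ) + (σ2 * lam) • (Pᵀ * P))⁻¹.mulVec
        (y + (σ2 * lam) • Pᵀ.mulVec f))
    (K : Matrix (Fin n) (Fin n) ℝ) (hK : K = (Pᵀ * P)⁻¹)
    (αhat : Fin n → ℝ)
    (hαhat : αhat = (K + (lam * σ2) • (1 : Matrix (Fin n) (Fin n) ℝ))⁻¹.mulVec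
        (y - P⁻¹.mulVec f)) :
    (∀ x : Fin n → ℝ, l x ≤ l xhat ∧ (l x = l xhat ↔ x = xhat)) ∧
      xhat = K.mulVec αhat + P⁻¹.mulVec f :=
  closed_form_state_estimate_general P hP f y σ2 lam hσ2 hlam l hl xhat hxhat K hK αhat hαhat
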